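/- arXiv:1602.00113 — 6 statements merged into one kernel-verified Lean document; each statement's English description precedes it below -/
import Mathlib

section
/- Let γ : ℝ → ℝ² be a T-periodic solution of ż = X(z) with X of class C², γ'(t) ≠ 0 everywhere, and define κ = (1/T)∫₀ᵀ div X(γ(t)) dt and the transversality defect E(t) = exp(∫₀ᵗ div X(γ(s)) ds − κ t). Let u(t) = E(t)/‖γ'(t)‖² and z_ε(t) = γ(t) + ε u(t) (γ'(t))⊥. Then the first-order term in ε of X(z_ε(t)) · (z_ε'(t))⊥ equals κ E(t); more precisely, d/dε [X(z_ε(t)) · (z_ε'(t))⊥] at ε = 0 equals κ E(t) for every t. -/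
/-!
Write `n = u γ'⊥` for the normal displacement, `A = DX(γ t)` and `N = ‖γ'‖²`. Since `γ'' = A γ'`
and `γ'⊥⊥ = -γ'`, the product rule gives

  d/dε [X(z_ε) · z_ε'⊥]_{ε=0} = u (⟨A γ'⊥, γ'⊥⟩ - ⟨A γ', γ'⟩) - u' N.

In the plane `⟨A v⊥, v⊥⟩ + ⟨A v, v⟩ = tr A · ‖v‖²`, and `N' = 2⟨A γ', γ'⟩`, so this is
`u N tr A - (u N)'`. As `u N = E` and `E' = (div X(γ) - κ) E = (tr A - κ) E`, it equals `κ E`.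
-/

lemma ContinuousLinearMap.apply_eq_fst_smul_add_snd_smul (A : ℝ × ℝ →L[ℝ] ℝ × ℝ) (v : ℝ × ℝ) :
    A v = v.1 • A (1, 0) + v.2 • A (0, 1) := by
  have hv : v = v.1 • ((1 : ℝ), (0 : ℝ)) + v.2 • ((0 : ℝ), (1 : ℝ)) := by ext <;> simp
  conv_lhs => rw [hv]
  rw [map_add, map_smul, map_smul]

lemma hasDerivAt_fst {f : ℝ → ℝ × ℝ} {f' : ℝ × ℝ} {t : ℝ} (h : HasDerivAt f f' t) :
    HasDerivAt (fun s => (f s).1) f'.1 t :=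
  (ContinuousLinearMap.fst ℝ ℝ ℝ).hasFDerivAt.comp_hasDerivAt t h

lemma hasDerivAt_snd {f : ℝ → ℝ × ℝ} {f' : ℝ × ℝ} {t : ℝ} (h : HasDerivAt f f' t) :
    HasDerivAt (fun s => (f s).2) f'.2 t :=
  (ContinuousLinearMap.snd ℝ ℝ ℝ).hasFDerivAt.comp_hasDerivAt t h

namespace PlanarVectorField

def perp : ℝ × ℝ →L[ℝ] ℝ × ℝ :=
  (ContinuousLinearMap.snd ℝ ℝ ℝ).prod (-ContinuousLinearMap.fst ℝ ℝ ℝ)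

def dot (a b : ℝ × ℝ) : ℝ := a.1 * b.1 + a.2 * b.2

@[simp] lemma perp_apply (v : ℝ × ℝ) : perp v = (v.2, -v.1) := rfl

lemma dot_comm (a b : ℝ × ℝ) : dot a b = dot b a := by
  unfold dot; ring

lemma hasDerivAt_dot {f g : ℝ → ℝ × ℝ} {f' g' : ℝ × ℝ} {t : ℝ}
    (hf : HasDerivAt f f' t) (hg : HasDerivAt g g' t) :
    HasDerivAt (fun s => dot (f s) (g s)) (dot f' (g t) + dot (f t) g') t :=
  (((hasDerivAt_fst hf).fun_mul (hasDerivAt_fst hg)).fun_add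
      ((hasDerivAt_snd hf).fun_mul (hasDerivAt_snd hg))).congr_deriv (by unfold dot; ring)

lemma dot_apply_perp_add_dot_apply (A : ℝ × ℝ →L[ℝ] ℝ × ℝ) (v : ℝ × ℝ) :
    dot (A (perp v)) (perp v) + dot (A v) v = ((A (1, 0)).1 + (A (0, 1)).2) * dot v v := by
  rw [A.apply_eq_fst_smul_add_snd_smul v, A.apply_eq_fst_smul_add_snd_smul (perp v)]
  unfold dot
  simp only [perp_apply, Prod.fst_add, Prod.snd_add, Prod.smul_fst, Prod.smul_snd, smul_eq_mul]
  ring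

lemma dot_self_eq (v : ℝ × ℝ) : dot v v = v.1 ^ 2 + v.2 ^ 2 := by
  unfold dot; ring

lemma dot_self_ne_zero {v : ℝ × ℝ} (hv : v ≠ 0) : dot v v ≠ 0 := by
  rw [dot_self_eq]
  contrapose! hv
  ext <;> simp <;> nlinarith [sq_nonneg v.1, sq_nonneg v.2]

lemma dot_apply_smul_perp_add_dot_perp (A : ℝ × ℝ →L[ℝ] ℝ × ℝ) (v : ℝ × ℝ) (u u' : ℝ) :
    dot (A (u • perp v)) (perp v) + dot v (perp (u • perp (A v) + u' • perp v)) =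
      u * (((A (1, 0)).1 + (A (0, 1)).2) * dot v v) - (u' * dot v v + u * (2 * dot (A v) v)) := by
  rw [map_smul, ← dot_apply_perp_add_dot_apply]
  unfold dot
  simp only [perp_apply, Prod.fst_add, Prod.snd_add, Prod.smul_fst, Prod.smul_snd, smul_eq_mul]
  ring

lemma hasDerivAt_transversality_of_affine {X : ℝ × ℝ → ℝ × ℝ} {A : ℝ × ℝ →L[ℝ] ℝ × ℝ}
    {z : ℝ → ℝ → ℝ × ℝ} {t : ℝ} {p w g w' : ℝ × ℝ} (hX : HasFDerivAt X A p)
    (hzt : ∀ ε, z ε t = p + ε • w) (hz' : ∀ ε, HasDerivAt (z ε) (g + ε • w') t) :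
    HasDerivAt (fun ε : ℝ => (X (z ε t)).1 * deriv (fun s => (z ε s).2) t -
        (X (z ε t)).2 * deriv (fun s => (z ε s).1) t)
      (dot (A w) (perp g) + dot (X p) (perp w')) 0 := by
  have hline : ∀ q v : ℝ × ℝ, HasDerivAt (fun ε : ℝ => q + ε • v) v 0 := fun q v => by
    simpa using ((hasDerivAt_id (0 : ℝ)).smul_const v).const_add q
  have hXz : HasDerivAt (fun ε : ℝ => X (p + ε • w)) (A w) 0 :=
    (by simpa using hX : HasFDerivAt X A (p + (0 : ℝ) • w)).comp_hasDerivAt 0 (hline p w)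
  have hperp : HasDerivAt (fun ε : ℝ => perp (g + ε • w')) (perp w') 0 :=
    perp.hasFDerivAt.comp_hasDerivAt 0 (hline g w')
  have hF : (fun ε : ℝ => (X (z ε t)).1 * deriv (fun s => (z ε s).2) t -
        (X (z ε t)).2 * deriv (fun s => (z ε s).1) t) =
      fun ε => dot (X (p + ε • w)) (perp (g + ε • w')) := by
    funext ε
    rw [(hasDerivAt_fst (hz' ε)).deriv, (hasDerivAt_snd (hz' ε)).deriv, hzt]
    unfold dot
    simp only [perp_apply]
    ring
  rw [hF]
  simpa using hasDerivAt_dot hXz hperp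

theorem hasDerivAt_transversality_normalVariation {X : ℝ × ℝ → ℝ × ℝ} {A : ℝ × ℝ →L[ℝ] ℝ × ℝ}
    {γ v : ℝ → ℝ × ℝ} {u : ℝ → ℝ} {u' t : ℝ} {z : ℝ → ℝ → ℝ × ℝ}
    (hX : HasFDerivAt X A (γ t)) (hXγ : X (γ t) = v t) (hγ : HasDerivAt γ (v t) t)
    (hv : HasDerivAt v (A (v t)) t) (hu : HasDerivAt u u' t)
    (hz : ∀ ε s, z ε s = γ s + ε • (u s • perp (v s))) :
    HasDerivAt (fun ε : ℝ => (X (z ε t)).1 * deriv (fun s => (z ε s).2) t -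
        (X (z ε t)).2 * deriv (fun s => (z ε s).1) t)
      (u t * (((A (1, 0)).1 + (A (0, 1)).2) * dot (v t) (v t)) -
        (u' * dot (v t) (v t) + u t * (2 * dot (A (v t)) (v t)))) 0 := by
  have hn : HasDerivAt (fun s => u s • perp (v s)) (u t • perp (A (v t)) + u' • perp (v t)) t :=
    hu.fun_smul (perp.hasFDerivAt.comp_hasDerivAt t hv)
  have h := hasDerivAt_transversality_of_affine hX (fun ε => hz ε t)
    (fun ε => (funext (hz ε)) ▸ hγ.fun_add (hn.const_smul ε))
  rwa [hXγ, dot_apply_smul_perp_add_dot_perp] at h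

end PlanarVectorField

open PlanarVectorField

lemma hasDerivAt_exp_integral_sub_mul {g : ℝ → ℝ} (hg : Continuous g) (κ t : ℝ) :
    HasDerivAt (fun t => Real.exp ((∫ s in (0 : ℝ)..t, g s) - κ * t))
      (Real.exp ((∫ s in (0 : ℝ)..t, g s) - κ * t) * (g t - κ)) t := by
  have hlin : HasDerivAt (fun t : ℝ => κ * t) κ t := by
    simpa using (hasDerivAt_id t).const_mul κ
  exact ((hg.integral_hasStrictDerivAt 0 t).hasDerivAt.sub hlin).exp

lemma continuous_divergence {X : ℝ × ℝ → ℝ × ℝ} (hX : ContDiff ℝ 1 X) :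
    Continuous fun z => (fderiv ℝ X z (1, 0)).1 + (fderiv ℝ X z (0, 1)).2 := by
  have h := hX.continuous_fderiv one_ne_zero
  exact (h.clm_apply continuous_const).fst.add (h.clm_apply continuous_const).snd

theorem stmt_3_general
    (X : ℝ × ℝ → ℝ × ℝ) (hX : ContDiff ℝ 2 X)
    (divX : ℝ × ℝ → ℝ)
    (hdiv : ∀ z : ℝ × ℝ, divX z = (fderiv ℝ X z (1, 0)).1 + (fderiv ℝ X z (0, 1)).2)
    (γ γ' : ℝ → ℝ × ℝ)
    (hγ : ∀ t : ℝ, HasDerivAt γ (γ' t) t)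
    (hsol : ∀ t : ℝ, γ' t = X (γ t))
    (hreg : ∀ t : ℝ, γ' t ≠ 0)
    (κ : ℝ)
    (E : ℝ → ℝ)
    (hE : ∀ t : ℝ, E t = Real.exp ((∫ s in (0:ℝ)..t, divX (γ s)) - κ * t))
    (u : ℝ → ℝ)
    (hu : ∀ t : ℝ, u t = E t / ((γ' t).1 ^ 2 + (γ' t).2 ^ 2))
    (z : ℝ → ℝ → ℝ × ℝ)
    (hz : ∀ ε t : ℝ, z ε t =
      ((γ t).1 + ε * u t * (γ' t).2, (γ t).2 - ε * u t * (γ' t).1)) :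
    ∀ t : ℝ, HasDerivAt
      (fun ε : ℝ =>
        (X (z ε t)).1 * (deriv (fun s => (z ε s).2) t) -
        (X (z ε t)).2 * (deriv (fun s => (z ε s).1) t))
      (κ * E t) 0 := by
  intro t
  set A := fderiv ℝ X (γ t)
  have hXA : HasFDerivAt X A (γ t) := (hX.differentiable two_ne_zero (γ t)).hasFDerivAt
  have hγ'' : HasDerivAt γ' (A (γ' t)) t :=
    (hXA.comp_hasDerivAt t (hγ t)).congr_of_eventuallyEq (Filter.Eventually.of_forall hsol)
  have hdivγ : Continuous fun s => divX (γ s) := by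
    simp_rw [hdiv]
    exact (continuous_divergence (hX.of_le one_le_two)).comp
      (continuous_iff_continuousAt.2 fun s => (hγ s).continuousAt)
  have hE_deriv : HasDerivAt E ((divX (γ t) - κ) * E t) t := by
    have h := hasDerivAt_exp_integral_sub_mul hdivγ κ t
    rw [← hE t, ← funext hE] at h
    exact h.congr_deriv (mul_comm _ _)
  have huN : ∀ s, u s * dot (γ' s) (γ' s) = E s := fun s => by
    rw [hu s, ← dot_self_eq, div_mul_cancel₀ _ (dot_self_ne_zero (hreg s))]
  have hN_deriv : HasDerivAt (fun s => dot (γ' s) (γ' s)) (2 * dot (A (γ' t)) (γ' t)) t :=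
    (hasDerivAt_dot hγ'' hγ'').congr_deriv (by rw [dot_comm (γ' t)]; ring)
  have hu_deriv : HasDerivAt u (deriv u t) t := by
    refine DifferentiableAt.hasDerivAt ?_
    rw [funext hu]
    simp_rw [← dot_self_eq]
    exact hE_deriv.differentiableAt.div hN_deriv.differentiableAt (dot_self_ne_zero (hreg t))
  have hE_eq := hE_deriv.unique ((funext huN) ▸ hu_deriv.fun_mul hN_deriv)
  have hz_perp : ∀ ε s, z ε s = γ s + ε • (u s • perp (γ' s)) := fun ε s => by
    rw [hz]; ext <;> simp <;> ring
  convert hasDerivAt_transversality_normalVariation hXA (hsol t).symm (hγ t) hγ'' hu_deriv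
    hz_perp using 1
  rw [← hdiv]
  linear_combination (-divX (γ t)) * huN t - hE_eq

theorem stmt_3 (T : ℝ) (hT : 0 < T)
    (X : ℝ × ℝ → ℝ × ℝ) (hX : ContDiff ℝ 2 X)
    (divX : ℝ × ℝ → ℝ)
    (hdiv : ∀ z : ℝ × ℝ, divX z = (fderiv ℝ X z (1, 0)).1 + (fderiv ℝ X z (0, 1)).2)
    (γ γ' : ℝ → ℝ × ℝ)
    (hγ : ∀ t : ℝ, HasDerivAt γ (γ' t) t)
    (hsol : ∀ t : ℝ, γ' t = X (γ t))
    (hper : ∀ t : ℝ, γ (t + T) = γ t)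
    (hreg : ∀ t : ℝ, γ' t ≠ 0)
    (κ : ℝ) (hκ : κ = (1 / T) * ∫ t in (0:ℝ)..T, divX (γ t))
    (E : ℝ → ℝ)
    (hE : ∀ t : ℝ, E t = Real.exp ((∫ s in (0:ℝ)..t, divX (γ s)) - κ * t))
    (u : ℝ → ℝ)
    (hu : ∀ t : ℝ, u t = E t / ((γ' t).1 ^ 2 + (γ' t).2 ^ 2))
    (z : ℝ → ℝ → ℝ × ℝ)
    (hz : ∀ ε t : ℝ, z ε t =
      ((γ t).1 + ε * u t * (γ' t).2, (γ t).2 - ε * u t * (γ' t).1)) :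
    ∀ t : ℝ, HasDerivAt
      (fun ε : ℝ =>
        (X (z ε t)).1 * (deriv (fun s => (z ε s).2) t) -
        (X (z ε t)).2 * (deriv (fun s => (z ε s).1) t))
      (κ * E t) 0 :=
  stmt_3_general X hX divX hdiv γ γ' hγ hsol hreg κ E hE u hu z hz
end

section
/- Let γ : ℝ → ℝ² be a solution of ż = X(z) (X of class C²) with γ' nonvanishing, defined on an interval, and let K ≠ 0 be a real constant. Define E_K(t) = exp(∫₀ᵗ div X(γ(s)) ds − K t), u_K(t) = E_K(t)/‖γ'(t)‖², and ẑ_{K,ε}(t) = γ(t) + ε u_K(t)(γ'(t))⊥. Then d/dε [X(ẑ_{K,ε}(t)) · (ẑ_{K,ε}'(t))⊥] evaluated at ε = 0 equals K E_K(t), which is nonzero with the sign of K; in particular for |ε| small enough with Kε of fixed sign, the curve ẑ_{K,ε} restricted to a compact time interval is strictly transversal to the flow of X. -/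
open intervalIntegral

private theorem aux_fst {f : ℝ → ℝ × ℝ} {d : ℝ × ℝ} {x : ℝ} (h : HasDerivAt f d x) :
    HasDerivAt (fun y => (f y).1) d.1 x :=
  ((ContinuousLinearMap.fst ℝ ℝ ℝ).hasFDerivAt.comp_hasDerivAt x h)

private theorem aux_snd {f : ℝ → ℝ × ℝ} {d : ℝ × ℝ} {x : ℝ} (h : HasDerivAt f d x) :
    HasDerivAt (fun y => (f y).2) d.2 x :=
  ((ContinuousLinearMap.snd ℝ ℝ ℝ).hasFDerivAt.comp_hasDerivAt x h)

private theorem aux_alg (K e n v₁ v₂ p₁ p₂ q₁ q₂ u u' w₁ w₂ d : ℝ)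
    (hn : n = v₁^2+v₂^2) (hn0 : n ≠ 0)
    (hd : d = p₁ + q₂)
    (hu : u = e/n)
    (hw₁ : w₁ = v₁*p₁+v₂*q₁) (hw₂ : w₂ = v₁*p₂+v₂*q₂)
    (hu' : u' = ((d-K)*e*n - e*(2*v₁*w₁+2*v₂*w₂))/n^2) :
    (u*v₂*p₁ - u*v₁*q₁)*v₂ + v₁*(-(u'*v₁+u*w₁))
      - ((u*v₂*p₂ - u*v₁*q₂)*v₁ + v₂*(u'*v₂+u*w₂)) = K*e := by
  subst hn hd hu hw₁ hw₂ hu'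
  field_simp
  ring

private theorem aux_pos {a : ℝ × ℝ} (h : a ≠ 0) : 0 < a.1^2 + a.2^2 := by
  rcases (not_and_or.1 (fun hc => h (Prod.ext hc.1 hc.2))) with h1 | h1
  · have := pow_pos (abs_pos.2 h1) 2
    rw [← sq_abs a.1] at *
    nlinarith [sq_nonneg a.2]
  · have := pow_pos (abs_pos.2 h1) 2
    rw [← sq_abs a.2] at *
    nlinarith [sq_nonneg a.1]

theorem stmt_5 (t₁ : ℝ) (ht₁ : 0 < t₁)
    (X : ℝ × ℝ → ℝ × ℝ) (hX : ContDiff ℝ 2 X)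
    (divX : ℝ × ℝ → ℝ)
    (hdiv : ∀ z : ℝ × ℝ, divX z = (fderiv ℝ X z (1, 0)).1 + (fderiv ℝ X z (0, 1)).2)
    (γ γ' : ℝ → ℝ × ℝ)
    (hγ : ∀ t : ℝ, HasDerivAt γ (γ' t) t)
    (hsol : ∀ t : ℝ, γ' t = X (γ t))
    (hreg : ∀ t : ℝ, γ' t ≠ 0)
    (K : ℝ) (hK : K ≠ 0)
    (E : ℝ → ℝ)
    (hE : ∀ t : ℝ, E t = Real.exp ((∫ s in (0:ℝ)..t, divX (γ s)) - K * t))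
    (u : ℝ → ℝ)
    (hu : ∀ t : ℝ, u t = E t / ((γ' t).1 ^ 2 + (γ' t).2 ^ 2))
    (z : ℝ → ℝ → ℝ × ℝ)
    (hz : ∀ ε t : ℝ, z ε t =
      ((γ t).1 + ε * u t * (γ' t).2, (γ t).2 - ε * u t * (γ' t).1)) :
    (∀ t : ℝ, HasDerivAt
      (fun ε : ℝ =>
        (X (z ε t)).1 * (deriv (fun s => (z ε s).2) t) -
        (X (z ε t)).2 * (deriv (fun s => (z ε s).1) t))
      (K * E t) 0) ∧
    (∃ ε₀ > (0:ℝ), ∀ ε : ℝ, ε ≠ 0 → |ε| < ε₀ → ∀ t ∈ Set.Icc (0:ℝ) t₁,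
      (X (z ε t)).1 * (deriv (fun s => (z ε s).2) t) -
        (X (z ε t)).2 * (deriv (fun s => (z ε s).1) t) ≠ 0) := by
  have hXd : Differentiable ℝ X := hX.differentiable (by norm_num)
  have hXc : Continuous X := hX.continuous
  have hAcont : Continuous (fderiv ℝ X) :=
    (hX.fderiv_right (m := 1) (by norm_num)).continuous
  have hγc : Continuous γ := continuous_iff_continuousAt.2 fun t => (hγ t).continuousAt
  have hγ'eq : γ' = fun t => X (γ t) := funext hsol
  have hγ'c : Continuous γ' := by rw [hγ'eq]; exact hXc.comp hγc
  set A : ℝ → (ℝ × ℝ →L[ℝ] ℝ × ℝ) := fun t => fderiv ℝ X (γ t) with hA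
  have hAc : Continuous A := hAcont.comp hγc
  set w : ℝ → ℝ × ℝ := fun t => A t (γ' t) with hw
  have hwc : Continuous w := hAc.clm_apply hγ'c
  have hγ'd : ∀ t, HasDerivAt γ' (w t) t := by
    intro t
    have h1 : HasDerivAt (fun s => X (γ s)) (A t (γ' t)) t :=
      (hXd (γ t)).hasFDerivAt.comp_hasDerivAt t (hγ t)
    rw [hγ'eq]; exact h1
  set N : ℝ → ℝ := fun t => (γ' t).1 ^ 2 + (γ' t).2 ^ 2 with hN
  have hNpos : ∀ t, 0 < N t := fun t => aux_pos (hreg t)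
  have hN0 : ∀ t, N t ≠ 0 := fun t => (hNpos t).ne'
  have hNc : Continuous N := ((hγ'c.fst.pow 2).add (hγ'c.snd.pow 2))
  have hNd : ∀ t, HasDerivAt N (2*(γ' t).1*(w t).1 + 2*(γ' t).2*(w t).2) t := by
    intro t
    have h1 := ((aux_fst (hγ'd t)).fun_pow 2).fun_add ((aux_snd (hγ'd t)).fun_pow 2)
    refine h1.congr_deriv ?_
    push_cast
    ring
  -- divergence along γ
  have hdγeq : (fun s => divX (γ s)) = fun s => (A s (1,0)).1 + (A s (0,1)).2 :=
    funext fun s => hdiv (γ s)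
  have hdγc : Continuous (fun s => divX (γ s)) := by
    rw [hdγeq]
    exact ((hAc.clm_apply continuous_const).fst).add ((hAc.clm_apply continuous_const).snd)
  have hId : ∀ t, HasDerivAt (fun r => ∫ s in (0:ℝ)..r, divX (γ s)) (divX (γ t)) t := by
    intro t
    exact intervalIntegral.integral_hasDerivAt_right (hdγc.intervalIntegrable 0 t)
      (hdγc.stronglyMeasurable.stronglyMeasurableAtFilter) hdγc.continuousAt
  have hEd : ∀ t, HasDerivAt E ((divX (γ t) - K) * E t) t := by
    intro t
    have h1 : HasDerivAt (fun r => (∫ s in (0:ℝ)..r, divX (γ s)) - K * r)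
        (divX (γ t) - K) t := by
      simpa using (hId t).fun_sub ((hasDerivAt_id t).const_mul K)
    have h2 := h1.exp
    have hEeq : E = fun r => Real.exp ((∫ s in (0:ℝ)..r, divX (γ s)) - K * r) := funext hE
    rw [hEeq]
    simpa [← hE t, mul_comm] using h2
  have hEc : Continuous E := continuous_iff_continuousAt.2 fun t =>
    (hEd t).differentiableAt.continuousAt
  have hEpos : ∀ t, 0 < E t := fun t => by rw [hE t]; exact Real.exp_pos _
  -- u
  set u' : ℝ → ℝ := fun t =>
    ((divX (γ t) - K) * E t * N t - E t * (2*(γ' t).1*(w t).1 + 2*(γ' t).2*(w t).2)) / N t ^ 2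
    with hu'def
  have hueq : u = fun t => E t / N t := funext hu
  have hud : ∀ t, HasDerivAt u (u' t) t := by
    intro t
    rw [hueq]
    exact (hEd t).div (hNd t) (hN0 t)
  have huc : Continuous u := continuous_iff_continuousAt.2 fun t =>
    (hud t).differentiableAt.continuousAt
  have hu'c : Continuous u' := by
    apply Continuous.div
    · exact ((hdγc.sub continuous_const).mul hEc).mul hNc |>.sub
        (hEc.mul (((continuous_const.mul hγ'c.fst).mul hwc.fst).add
          ((continuous_const.mul hγ'c.snd).mul hwc.snd)))
    · exact hNc.pow 2
    · exact fun t => pow_ne_zero 2 (hN0 t)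
  -- time derivatives of z components
  set C₁ : ℝ → ℝ := fun t => u' t * (γ' t).1 + u t * (w t).1 with hC₁
  set C₂ : ℝ → ℝ := fun t => u' t * (γ' t).2 + u t * (w t).2 with hC₂
  have hC₁c : Continuous C₁ := (hu'c.mul hγ'c.fst).add (huc.mul hwc.fst)
  have hC₂c : Continuous C₂ := (hu'c.mul hγ'c.snd).add (huc.mul hwc.snd)
  have hZ1 : ∀ ε t, HasDerivAt (fun s => (z ε s).1) ((γ' t).1 + ε * C₂ t) t := by
    intro ε t
    have heq : (fun s => (z ε s).1) = fun s => (γ s).1 + ε * u s * (γ' s).2 :=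
      funext fun s => by rw [hz]
    rw [heq]
    have h1 := (aux_fst (hγ t)).fun_add (((hud t).const_mul ε).fun_mul (aux_snd (hγ'd t)))
    refine h1.congr_deriv ?_
    simp only [hC₂]
    ring
  have hZ2 : ∀ ε t, HasDerivAt (fun s => (z ε s).2) ((γ' t).2 - ε * C₁ t) t := by
    intro ε t
    have heq : (fun s => (z ε s).2) = fun s => (γ s).2 - ε * u s * (γ' s).1 :=
      funext fun s => by rw [hz]
    rw [heq]
    have h1 := (aux_snd (hγ t)).fun_sub (((hud t).const_mul ε).fun_mul (aux_fst (hγ'd t)))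
    refine h1.congr_deriv ?_
    simp only [hC₁]
    ring
  -- derivative in ε of z
  set Zv : ℝ → ℝ × ℝ := fun t => (u t * (γ' t).2, -(u t * (γ' t).1)) with hZv
  have hZvc : Continuous Zv := ((huc.mul hγ'c.snd).prodMk (huc.mul hγ'c.fst).neg)
  have hζ : ∀ ε t, HasDerivAt (fun e => z e t) (Zv t) ε := by
    intro ε t
    have heq : (fun e => z e t)
        = fun e => ((γ t).1 + e * u t * (γ' t).2, (γ t).2 - e * u t * (γ' t).1) :=
      funext fun e => hz e t
    rw [heq]
    apply HasDerivAt.prodMk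
    · have h := (((hasDerivAt_id ε).mul_const (u t)).mul_const ((γ' t).2)).const_add ((γ t).1)
      convert h using 1
      simp [hZv]; ring
    · have h := (((hasDerivAt_id ε).mul_const (u t)).mul_const ((γ' t).1)).const_sub ((γ t).2)
      convert h using 1
      simp [hZv]; ring
  have hXz : ∀ ε t, HasDerivAt (fun e => X (z e t)) (fderiv ℝ X (z ε t) (Zv t)) ε :=
    fun ε t => (hXd (z ε t)).hasFDerivAt.comp_hasDerivAt ε (hζ ε t)
  set G : ℝ → ℝ → ℝ := fun ε t =>
    (fderiv ℝ X (z ε t) (Zv t)).1 * ((γ' t).2 - ε * C₁ t) + (X (z ε t)).1 * (-C₁ t)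
    - ((fderiv ℝ X (z ε t) (Zv t)).2 * ((γ' t).1 + ε * C₂ t) + (X (z ε t)).2 * C₂ t) with hG
  have hFd : ∀ ε t, HasDerivAt (fun e => (X (z e t)).1 * ((γ' t).2 - e * C₁ t)
      - (X (z e t)).2 * ((γ' t).1 + e * C₂ t)) (G ε t) ε := by
    intro ε t
    have hd2 : HasDerivAt (fun e : ℝ => (γ' t).2 - e * C₁ t) (-C₁ t) ε := by
      simpa using ((hasDerivAt_id ε).mul_const (C₁ t)).const_sub ((γ' t).2)
    have hd1 : HasDerivAt (fun e : ℝ => (γ' t).1 + e * C₂ t) (C₂ t) ε := by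
      simpa using ((hasDerivAt_id ε).mul_const (C₂ t)).const_add ((γ' t).1)
    exact ((aux_fst (hXz ε t)).mul hd2).sub ((aux_snd (hXz ε t)).mul hd1)
  have hz0 : ∀ t, z 0 t = γ t := fun t => by rw [hz]; simp
  -- value of G at ε = 0
  have hG0 : ∀ t, G 0 t = K * E t := by
    intro t
    have hlin : ∀ a b : ℝ, fderiv ℝ X (γ t) (a, b)
        = a • (fderiv ℝ X (γ t) (1, 0)) + b • (fderiv ℝ X (γ t) (0, 1)) := by
      intro a b
      have hab : ((a, b) : ℝ × ℝ) = a • ((1:ℝ), (0:ℝ)) + b • ((0:ℝ), (1:ℝ)) := by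
        simp [Prod.ext_iff]
      rw [hab, map_add, map_smul, map_smul]
    have hwcomp : w t = (γ' t).1 • (fderiv ℝ X (γ t) (1, 0))
        + (γ' t).2 • (fderiv ℝ X (γ t) (0, 1)) := by
      have := hlin (γ' t).1 (γ' t).2
      rw [Prod.mk.eta] at this
      exact this
    have hw1 : (w t).1 = (γ' t).1 * (fderiv ℝ X (γ t) (1, 0)).1
        + (γ' t).2 * (fderiv ℝ X (γ t) (0, 1)).1 := by rw [hwcomp]; simp
    have hw2 : (w t).2 = (γ' t).1 * (fderiv ℝ X (γ t) (1, 0)).2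
        + (γ' t).2 * (fderiv ℝ X (γ t) (0, 1)).2 := by rw [hwcomp]; simp
    have hZvcomp := hlin (u t * (γ' t).2) (-(u t * (γ' t).1))
    have hZ1' : (fderiv ℝ X (γ t) (Zv t)).1
        = u t * (γ' t).2 * (fderiv ℝ X (γ t) (1, 0)).1
          - u t * (γ' t).1 * (fderiv ℝ X (γ t) (0, 1)).1 := by
      rw [hZv]; rw [hZvcomp]; simp; ring
    have hZ2' : (fderiv ℝ X (γ t) (Zv t)).2
        = u t * (γ' t).2 * (fderiv ℝ X (γ t) (1, 0)).2
          - u t * (γ' t).1 * (fderiv ℝ X (γ t) (0, 1)).2 := by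
      rw [hZv]; rw [hZvcomp]; simp; ring
    have key := aux_alg K (E t) (N t) (γ' t).1 (γ' t).2
      (fderiv ℝ X (γ t) (1, 0)).1 (fderiv ℝ X (γ t) (1, 0)).2
      (fderiv ℝ X (γ t) (0, 1)).1 (fderiv ℝ X (γ t) (0, 1)).2
      (u t) (u' t) ((w t).1) ((w t).2) (divX (γ t))
      rfl (hN0 t) (hdiv (γ t)) (hu t) hw1 hw2 rfl
    simp only [hG, hz0 t]
    rw [← hsol t, hZ1', hZ2']
    simp only [hC₁, hC₂]
    linear_combination key
  have hFeq : ∀ t, (fun ε => (X (z ε t)).1 * (deriv (fun s => (z ε s).2) t)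
      - (X (z ε t)).2 * (deriv (fun s => (z ε s).1) t))
      = fun ε => (X (z ε t)).1 * ((γ' t).2 - ε * C₁ t)
        - (X (z ε t)).2 * ((γ' t).1 + ε * C₂ t) :=
    fun t => funext fun ε => by rw [(hZ1 ε t).deriv, (hZ2 ε t).deriv]
  constructor
  · intro t
    have h := hFd 0 t
    rw [hG0 t] at h
    rw [hFeq t]
    exact h
  · -- continuity of G jointly
    have hzc : Continuous fun p : ℝ × ℝ => z p.1 p.2 := by
      have heq : (fun p : ℝ × ℝ => z p.1 p.2)
          = fun p => ((γ p.2).1 + p.1 * u p.2 * (γ' p.2).2,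
              (γ p.2).2 - p.1 * u p.2 * (γ' p.2).1) :=
        funext fun p => hz p.1 p.2
      rw [heq]
      exact ((hγc.comp continuous_snd).fst.add
          ((continuous_fst.mul (huc.comp continuous_snd)).mul
            (hγ'c.comp continuous_snd).snd)).prodMk
        ((hγc.comp continuous_snd).snd.sub
          ((continuous_fst.mul (huc.comp continuous_snd)).mul
            (hγ'c.comp continuous_snd).fst))
    have hGc : Continuous fun p : ℝ × ℝ => G p.1 p.2 := by
      simp only [hG]
      exact ((((hAcont.comp hzc).clm_apply (hZvc.comp continuous_snd)).fst.mul
          ((hγ'c.comp continuous_snd).snd.sub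
            (continuous_fst.mul (hC₁c.comp continuous_snd)))).add
        ((hXc.comp hzc).fst.mul (hC₁c.comp continuous_snd).neg)).sub
        ((((hAcont.comp hzc).clm_apply (hZvc.comp continuous_snd)).snd.mul
          ((hγ'c.comp continuous_snd).fst.add
            (continuous_fst.mul (hC₂c.comp continuous_snd)))).add
        ((hXc.comp hzc).snd.mul (hC₂c.comp continuous_snd)))
    have hUopen : IsOpen {p : ℝ × ℝ | G p.1 p.2 ≠ 0} :=
      isOpen_compl_singleton.preimage hGc
    have hcpt : IsCompact ((({0} : Set ℝ)) ×ˢ Set.Icc (0:ℝ) t₁) :=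
      isCompact_singleton.prod isCompact_Icc
    have hsub : (({0} : Set ℝ)) ×ˢ Set.Icc (0:ℝ) t₁ ⊆ {p : ℝ × ℝ | G p.1 p.2 ≠ 0} := by
      rintro ⟨a, t⟩ ⟨ha, ht⟩
      simp only [Set.mem_singleton_iff] at ha
      subst ha
      show G 0 t ≠ 0
      rw [hG0 t]
      exact mul_ne_zero hK (hEpos t).ne'
    obtain ⟨δ, hδpos, hδ⟩ := hcpt.exists_thickening_subset_open hUopen hsub
    refine ⟨δ, hδpos, ?_⟩
    intro ε hε hεδ t ht
    have hGne : ∀ c : ℝ, |c| ≤ |ε| → G c t ≠ 0 := by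
      intro c hc
      have hmem : (c, t) ∈ Metric.thickening δ ((({0} : Set ℝ)) ×ˢ Set.Icc (0:ℝ) t₁) := by
        rw [Metric.mem_thickening_iff]
        refine ⟨(0, t), ⟨rfl, ht⟩, ?_⟩
        have : dist ((c, t) : ℝ × ℝ) (0, t) = |c| := by
          simp [Prod.dist_eq, Real.dist_eq]
        rw [this]
        exact lt_of_le_of_lt hc hεδ
      exact hδ hmem
    rw [(hZ1 ε t).deriv, (hZ2 ε t).deriv]
    set f : ℝ → ℝ := fun e => (X (z e t)).1 * ((γ' t).2 - e * C₁ t)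
      - (X (z e t)).2 * ((γ' t).1 + e * C₂ t) with hf
    have hf0 : f 0 = 0 := by
      simp only [hf, hz0 t, ← hsol t]
      ring
    show f ε ≠ 0
    rcases hε.lt_or_gt with hlt | hgt
    · obtain ⟨c, hc, hceq⟩ := exists_hasDerivAt_eq_slope f (fun x => G x t) hlt
        (fun x _ => (hFd x t).continuousAt.continuousWithinAt) (fun x _ => hFd x t)
      have hc' : |c| ≤ |ε| := by
        rw [abs_of_neg hc.2, abs_of_neg hlt]
        linarith [hc.1]
      have hne := hGne c hc'
      rw [hceq, hf0] at hne
      intro hfε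
      apply hne
      rw [hfε]
      simp
    · obtain ⟨c, hc, hceq⟩ := exists_hasDerivAt_eq_slope f (fun x => G x t) hgt
        (fun x _ => (hFd x t).continuousAt.continuousWithinAt) (fun x _ => hFd x t)
      have hc' : |c| ≤ |ε| := by
        rw [abs_of_pos hc.1, abs_of_pos hgt]
        linarith [hc.2]
      have hne := hGne c hc'
      rw [hceq, hf0] at hne
      intro hfε
      apply hne
      rw [hfε]
      simp
end

section
/- For the classical Liénard system ẋ = y − F(x), ẏ = −x, with F a real polynomial, and for any n ∈ ℕ, there exists a unique polynomial B_n(x,y) = Σ_{i=0}^{n} B_i(x) yⁱ with B_n(0,y) = yⁿ (i.e., B_n(0) = 1 and B_i(0) = 0 for i < n) such that the derivative of B_n along the flow, ∂B_n/∂x · (y − F(x)) − x ∂B_n/∂y, is a polynomial in x alone (independent of y). -/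
/-!
Write `B = ∑ bₖ(x) yᵏ` as a polynomial in `y` over `ℝ[x]`. The coefficient of `yᵏ⁺¹` in `Ḃ` is
`bₖ' - F bₖ₊₁' - (k + 2) x bₖ₊₂`, so `Ḃ` is independent of `y` exactly when
`bₖ' = F bₖ₊₁' + (k + 2) x bₖ₊₂` for all `k`. Going down from `bₙ`, this recurrence fixes each
`bₖ` up to an additive constant, which the normalisation `bₖ(0) = δₖₙ` pins down; taking
antiderivatives that vanish at `0` gives the solution, and the same downward induction shows
that it is the only one.
-/

open Polynomial
open scoped Polynomial.Bivariate

namespace Polynomial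

section Antiderivative

variable {K : Type*} [Field K]

noncomputable def antideriv (p : K[X]) : K[X] :=
  p.sum fun k a => monomial (k + 1) (a / (k + 1))

@[simp]
theorem derivative_antideriv [CharZero K] (p : K[X]) : derivative (antideriv p) = p := by
  rw [antideriv, Polynomial.sum, derivative_sum]
  conv_rhs => rw [← sum_monomial_eq p, Polynomial.sum]
  refine Finset.sum_congr rfl fun k _ => ?_
  rw [derivative_monomial, Nat.add_sub_cancel]
  congr 1
  push_cast
  field_simp

@[simp]
theorem eval_zero_antideriv (p : K[X]) : (antideriv p).eval 0 = 0 := by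
  simp [antideriv, Polynomial.sum, eval_finsetSum]

end Antiderivative

theorem eq_of_derivative_eq_of_eval_zero_eq {R : Type*} [Ring R] [IsAddTorsionFree R]
    {p q : R[X]} (hd : derivative p = derivative q) (h0 : p.eval 0 = q.eval 0) : p = q := by
  have h := eq_C_of_derivative_eq_zero (p := p - q) (by rw [derivative_sub, hd, sub_self])
  rw [coeff_zero_eq_eval_zero, eval_sub, h0, sub_self, map_zero] at h
  exact sub_eq_zero.mp h

section Bivariate

variable {R : Type*} [CommRing R]

noncomputable def partialX (P : R[X][Y]) : R[X][Y] :=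
  P.sum fun k a => monomial k (derivative a)

@[simp]
theorem coeff_partialX (P : R[X][Y]) (k : ℕ) :
    (partialX P).coeff k = derivative (P.coeff k) := by
  rw [partialX, coeff_sum, Polynomial.sum_def]
  simp only [coeff_monomial]
  rw [Finset.sum_ite_eq']
  split_ifs with h
  · rfl
  · rw [notMem_support_iff.mp h, derivative_zero]

theorem eq_of_forall_evalEval_eq [IsDomain R] [Infinite R] {P Q : R[X][Y]}
    (h : ∀ x y, P.evalEval x y = Q.evalEval x y) : P = Q := by
  refine eq_of_infinite_eval_eq P Q ((Set.infinite_range_of_injective C_injective).mono ?_)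
  rintro _ ⟨y, rfl⟩
  exact Polynomial.funext fun x => h x y

theorem exists_forall_evalEval_eq_eval_iff [IsDomain R] [Infinite R] (P : R[X][Y]) :
    (∃ r : R[X], ∀ x y, P.evalEval x y = r.eval x) ↔ ∃ r, P = C r := by
  refine exists_congr fun r => ⟨fun h => eq_of_forall_evalEval_eq fun x y => ?_, ?_⟩
  · rw [h, evalEval_C]
  · rintro rfl x y
    exact evalEval_C x y r

noncomputable def bivOfFin {n : ℕ} (B : Fin (n + 1) → R[X]) : R[X][Y] :=
  ∑ i, C (B i) * Y ^ (i : ℕ)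

theorem coeff_bivOfFin {n : ℕ} (B : Fin (n + 1) → R[X]) (i : Fin (n + 1)) :
    (bivOfFin B).coeff i = B i := by
  simp [bivOfFin, Fin.val_inj]

theorem coeff_bivOfFin_of_lt {n k : ℕ} (B : Fin (n + 1) → R[X]) (hk : n < k) :
    (bivOfFin B).coeff k = 0 := by
  simp only [bivOfFin, finsetSum_coeff, coeff_C_mul_X_pow]
  exact Finset.sum_eq_zero fun i _ => if_neg (by omega)

theorem coeff_bivOfFin_restrict {n : ℕ} (b : ℕ → R[X]) (hb : ∀ k, n < k → b k = 0) :
    (bivOfFin fun i : Fin (n + 1) => b i).coeff = b := by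
  ext1 k
  rcases lt_or_ge n k with hk | hk
  · rw [coeff_bivOfFin_of_lt _ hk, hb k hk]
  · exact coeff_bivOfFin (fun i : Fin (n + 1) => b i) ⟨k, by omega⟩

theorem eval_zero_coeff_bivOfFin {n : ℕ} (B : Fin (n + 1) → R[X])
    (hn : (B ⟨n, Nat.lt_succ_self n⟩).eval 0 = 1)
    (hlt : ∀ i : Fin (n + 1), (i : ℕ) < n → (B i).eval 0 = 0) (k : ℕ) :
    ((bivOfFin B).coeff k).eval 0 = if k = n then 1 else 0 := by
  rcases lt_trichotomy k n with hk | rfl | hk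
  · rw [if_neg hk.ne, show (bivOfFin B).coeff k = B ⟨k, by omega⟩ from coeff_bivOfFin B ⟨k, _⟩]
    exact hlt _ hk
  · rw [if_pos rfl, show (bivOfFin B).coeff k = B ⟨k, _⟩ from coeff_bivOfFin B (Fin.last k), hn]
  · rw [if_neg hk.ne', coeff_bivOfFin_of_lt B hk, eval_zero]

theorem partialX_bivOfFin {n : ℕ} (B : Fin (n + 1) → R[X]) :
    partialX (bivOfFin B) = bivOfFin fun i => derivative (B i) := by
  ext1 k
  rcases lt_or_ge n k with hk | hk
  · rw [coeff_partialX, coeff_bivOfFin_of_lt _ hk, coeff_bivOfFin_of_lt _ hk, derivative_zero]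
  · obtain ⟨i, rfl⟩ : ∃ i : Fin (n + 1), (i : ℕ) = k := ⟨⟨k, by omega⟩, rfl⟩
    rw [coeff_partialX, coeff_bivOfFin, coeff_bivOfFin]

end Bivariate

end Polynomial

section Lienard

variable {R : Type*} [CommRing R]

noncomputable def lienardDeriv (F : R[X]) (P : R[X][Y]) : R[X][Y] :=
  partialX P * (Y - C F) - C X * derivative P

theorem coeff_lienardDeriv_succ (F : R[X]) (P : R[X][Y]) (k : ℕ) :
    (lienardDeriv F P).coeff (k + 1) = derivative (P.coeff k) -
      F * derivative (P.coeff (k + 1)) - ((k : R[X]) + 2) * X * P.coeff (k + 2) := by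
  simp only [lienardDeriv, mul_sub, coeff_sub, coeff_mul_X, coeff_mul_C, coeff_C_mul,
    coeff_derivative, coeff_partialX]
  push_cast
  ring

theorem evalEval_lienardDeriv_bivOfFin (F : R[X]) {n : ℕ} (B : Fin (n + 1) → R[X]) (x y : R) :
    (lienardDeriv F (bivOfFin B)).evalEval x y =
      (∑ i : Fin (n + 1), (B i).derivative.eval x * y ^ (i : ℕ)) * (y - F.eval x) -
        x * (∑ i : Fin (n + 1), (i : ℕ) * (B i).eval x * y ^ ((i : ℕ) - 1)) := by
  rw [lienardDeriv, partialX_bivOfFin]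
  simp only [bivOfFin, evalEval_sub, evalEval_mul, evalEval_finsetSum, derivative_sum,
    derivative_C_mul_X_pow, evalEval_C, evalEval_X, evalEval_pow, eval_X, eval_mul,
    eval_natCast, mul_comm (eval x _)]

def LienardRecurrence (F : R[X]) (b : ℕ → R[X]) : Prop :=
  ∀ k : ℕ, derivative (b k) = F * derivative (b (k + 1)) + ((k : R[X]) + 2) * X * b (k + 2)

theorem exists_eq_C_lienardDeriv_iff (F : R[X]) (P : R[X][Y]) :
    (∃ r, lienardDeriv F P = C r) ↔ LienardRecurrence F P.coeff := by
  constructor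
  · rintro ⟨r, hr⟩ k
    have hk := coeff_lienardDeriv_succ F P k
    rw [hr, coeff_C_succ] at hk
    linear_combination -hk
  · intro h
    refine ⟨(lienardDeriv F P).coeff 0, ?_⟩
    ext1 k
    cases k with
    | zero => rw [coeff_C_zero]
    | succ k => rw [coeff_lienardDeriv_succ, coeff_C_succ, h k]; ring

theorem LienardRecurrence.ext [IsAddTorsionFree R] {F : R[X]} {n : ℕ} {b₁ b₂ : ℕ → R[X]}
    (h₁ : LienardRecurrence F b₁) (h₂ : LienardRecurrence F b₂)
    (hn₁ : ∀ k, n < k → b₁ k = 0) (hn₂ : ∀ k, n < k → b₂ k = 0)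
    (h0 : ∀ k, (b₁ k).eval 0 = (b₂ k).eval 0) : b₁ = b₂ := by
  suffices h : ∀ j k, n < k + j → b₁ k = b₂ k from funext fun k => h (n + 1) k (by omega)
  intro j
  induction j with
  | zero => intro k hk; rw [hn₁ k hk, hn₂ k hk]
  | succ j ih =>
    intro k hk
    refine eq_of_derivative_eq_of_eval_zero_eq ?_ (h0 k)
    rw [h₁ k, h₂ k, ih (k + 1) (by omega), ih (k + 2) (by omega)]

variable {K : Type*} [Field K]

noncomputable def lienardCoeff (F : K[X]) (n k : ℕ) : K[X] :=
  if k < n then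
    antideriv (F * derivative (lienardCoeff F n (k + 1)) +
      ((k : K[X]) + 2) * X * lienardCoeff F n (k + 2))
  else if k = n then 1 else 0
termination_by n - k

theorem lienardCoeff_of_lt (F : K[X]) {n k : ℕ} (hk : k < n) :
    lienardCoeff F n k = antideriv (F * derivative (lienardCoeff F n (k + 1)) +
      ((k : K[X]) + 2) * X * lienardCoeff F n (k + 2)) := by
  rw [lienardCoeff, if_pos hk]

theorem lienardCoeff_of_gt (F : K[X]) {n k : ℕ} (hk : n < k) : lienardCoeff F n k = 0 := by
  rw [lienardCoeff, if_neg (by omega), if_neg (by omega)]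

theorem lienardCoeff_self (F : K[X]) (n : ℕ) : lienardCoeff F n n = 1 := by
  rw [lienardCoeff, if_neg (lt_irrefl n), if_pos rfl]

theorem eval_zero_lienardCoeff (F : K[X]) (n k : ℕ) :
    (lienardCoeff F n k).eval 0 = if k = n then 1 else 0 := by
  rcases lt_trichotomy k n with hk | rfl | hk
  · rw [lienardCoeff_of_lt F hk, eval_zero_antideriv, if_neg hk.ne]
  · rw [lienardCoeff_self, eval_one, if_pos rfl]
  · rw [lienardCoeff_of_gt F hk, eval_zero, if_neg hk.ne']

theorem lienardRecurrence_lienardCoeff [CharZero K] (F : K[X]) (n : ℕ) :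
    LienardRecurrence F (lienardCoeff F n) := by
  intro k
  rcases lt_or_ge k n with hk | hk
  · rw [lienardCoeff_of_lt F hk, derivative_antideriv]
  · rw [lienardCoeff_of_gt F (k := k + 1) (by omega), lienardCoeff_of_gt F (k := k + 2) (by omega)]
    rcases hk.eq_or_lt with rfl | hk
    · simp [lienardCoeff_self]
    · simp [lienardCoeff_of_gt F hk]

end Lienard

theorem stmt_7 (F : Polynomial ℝ) (n : ℕ) :
    ∃! B : Fin (n + 1) → Polynomial ℝ,
      (B ⟨n, Nat.lt_succ_self n⟩).eval 0 = 1 ∧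
      (∀ i : Fin (n + 1), (i : ℕ) < n → (B i).eval 0 = 0) ∧
      ∃ R : Polynomial ℝ, ∀ x y : ℝ,
        (∑ i : Fin (n + 1), (B i).derivative.eval x * y ^ (i : ℕ)) * (y - F.eval x) -
          x * (∑ i : Fin (n + 1), (i : ℕ) * (B i).eval x * y ^ ((i : ℕ) - 1)) =
        R.eval x := by
  simp_rw [← evalEval_lienardDeriv_bivOfFin, exists_forall_evalEval_eq_eval_iff,
    exists_eq_C_lienardDeriv_iff]
  refine ⟨fun i => lienardCoeff F n i, ⟨?_, fun i hi => ?_, ?_⟩, ?_⟩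
  · exact (eval_zero_lienardCoeff F n n).trans (if_pos rfl)
  · rw [eval_zero_lienardCoeff, if_neg hi.ne]
  · rw [coeff_bivOfFin_restrict _ fun k hk => lienardCoeff_of_gt F hk]
    exact lienardRecurrence_lienardCoeff F n
  · rintro B ⟨hn, hlt, hrec⟩
    have hcoeff := hrec.ext (lienardRecurrence_lienardCoeff F n)
      (fun k hk => coeff_bivOfFin_of_lt B hk) (fun k hk => lienardCoeff_of_gt F hk)
      (fun k => by rw [eval_zero_coeff_bivOfFin B hn hlt, eval_zero_lienardCoeff])
    funext i
    rw [← coeff_bivOfFin B i, hcoeff]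
end

section
/- With the construction of the previous proposition for the Liénard system ẋ = y − F(x), ẏ = −x: the top coefficients satisfy B_n(x) ≡ 1, B_{n−1}(x) ≡ 0, B_{n−2}(x) = n x²/2, B_{n−3}(x) = n ∫₀ˣ s F(s) ds, and the derivative along the flow equals Ḃ(x,y) = −F(x) B₀'(x) − x B₁(x). -/
/-!
Fix `x`. Since the flow derivative does not depend on `y`, the polynomial in `y`
`(∑ Bᵢ'(x) yⁱ)(y - F(x)) - ∂_y(∑ x Bᵢ(x) yⁱ)` is constant; comparing its coefficients of `y^(k+1)`
gives `B_k' - F B_{k+1}' = (k + 2) x B_{k+2}`, and its constant term is `-F B₀' - x B₁`.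
Running the recurrence down from `k = n`, where `B_{n+1} = B_{n+2} = 0`, gives `B_n'`, `B_{n-1}'`,
`B_{n-2}'`, `B_{n-3}'` in turn, and the normalisations at `0` integrate them.
`B_k` for all `k : ℕ`, zero for `k > n`, is encoded as `(ofFn (n + 1) B).coeff k`.
-/

open intervalIntegral

open Polynomial

namespace Polynomial

section CommRing

variable {R : Type*} [CommRing R]

theorem coeff_sub_mul_coeff_succ_of_mul_X_sub_C_sub_derivative {p q : R[X]} {c r : R}
    (h : p * (X - C c) - derivative q = C r) (k : ℕ) :
    p.coeff k - c * p.coeff (k + 1) = (k + 2) * q.coeff (k + 2) := by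
  have hk := congrArg (coeff · (k + 1)) h
  simp only [coeff_sub, coeff_mul_X_sub_C, coeff_derivative, coeff_C_succ] at hk
  push_cast at hk
  linear_combination hk

theorem coeff_zero_of_mul_X_sub_C_sub_derivative {p q : R[X]} {c r : R}
    (h : p * (X - C c) - derivative q = C r) :
    -(c * p.coeff 0) - q.coeff 1 = r := by
  have h0 := congrArg (coeff · 0) h
  simp only [coeff_sub, mul_coeff_zero, coeff_X_zero, coeff_C_zero, coeff_derivative] at h0
  linear_combination h0

variable [DecidableEq R] {n : ℕ}

theorem eval_ofFn (v : Fin n → R) (y : R) : (ofFn n v).eval y = ∑ i, v i * y ^ (i : ℕ) := by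
  simp [ofFn_eq_sum_monomial, eval_finsetSum]

theorem eval_derivative_ofFn (v : Fin n → R) (y : R) :
    (derivative (ofFn n v)).eval y = ∑ i : Fin n, ((i : ℕ) : R) * v i * y ^ ((i : ℕ) - 1) := by
  simp only [ofFn_eq_sum_monomial, derivative_sum, derivative_monomial, eval_finsetSum,
    eval_monomial]
  exact Finset.sum_congr rfl fun i _ => by ring

theorem coeff_ofFn_comp {S : Type*} [Semiring S] [DecidableEq S] {f : R → S} (hf : f 0 = 0)
    (v : Fin n → R) (k : ℕ) : (ofFn n (f ∘ v)).coeff k = f ((ofFn n v).coeff k) := by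
  rcases lt_or_ge k n with hk | hk
  · simp [ofFn_coeff_eq_val_of_lt _ hk]
  · simp [ofFn_coeff_eq_zero_of_ge _ hk, hf]

end CommRing

theorem eval_eq_eval_zero_add_integral (p : ℝ[X]) (x : ℝ) :
    p.eval x = p.eval 0 + ∫ s in (0 : ℝ)..x, p.derivative.eval s := by
  rw [integral_eq_sub_of_hasDerivAt (fun s _ => p.hasDerivAt s)
    (p.derivative.continuous.intervalIntegrable 0 x)]
  ring

end Polynomial

namespace Lienard

/-- `R(x)` is the derivative of `∑ᵢ Bᵢ(x) yⁱ` along the flow `ẋ = y - F(x)`, `ẏ = -x`. -/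
def IsFlowDerivative {n : ℕ} (F : ℝ[X]) (B : Fin (n + 1) → ℝ[X]) (R : ℝ[X]) : Prop :=
  ∀ x y : ℝ,
    (∑ i : Fin (n + 1), (B i).derivative.eval x * y ^ (i : ℕ)) * (y - F.eval x) -
      x * (∑ i : Fin (n + 1), (i : ℕ) * (B i).eval x * y ^ ((i : ℕ) - 1)) = R.eval x

namespace IsFlowDerivative

variable {F R : ℝ[X]} {n : ℕ} {B : Fin (n + 1) → ℝ[X]}

theorem mul_X_sub_C_sub_derivative_eq_C (hflow : IsFlowDerivative F B R) (x : ℝ) :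
    ofFn (n + 1) (fun i => (B i).derivative.eval x) * (X - C (F.eval x)) -
        derivative (ofFn (n + 1) (fun i => x * (B i).eval x)) = C (R.eval x) := by
  refine Polynomial.funext fun y => ?_
  simp only [eval_sub, eval_mul, eval_ofFn, eval_derivative_ofFn, eval_X, eval_C, ← hflow x y,
    Finset.mul_sum]
  congr 1
  exact Finset.sum_congr rfl fun i _ => by ring

theorem derivative_coeff (hflow : IsFlowDerivative F B R) (k : ℕ) :
    derivative ((ofFn (n + 1) B).coeff k) =
      F * derivative ((ofFn (n + 1) B).coeff (k + 1)) +
        C ((k : ℝ) + 2) * X * (ofFn (n + 1) B).coeff (k + 2) := by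
  refine Polynomial.funext fun x => ?_
  have h := coeff_sub_mul_coeff_succ_of_mul_X_sub_C_sub_derivative
    (hflow.mul_X_sub_C_sub_derivative_eq_C x) k
  have hd (j : ℕ) := coeff_ofFn_comp (f := fun p : ℝ[X] => p.derivative.eval x) (by simp) B j
  have he (j : ℕ) := coeff_ofFn_comp (f := fun p : ℝ[X] => x * p.eval x) (by simp) B j
  simp only [Function.comp_def] at hd he
  rw [hd, hd, he] at h
  simp only [eval_add, eval_mul, eval_C, eval_X]
  linear_combination h

theorem eval_eq (hflow : IsFlowDerivative F B R) (x : ℝ) :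
    R.eval x = -F.eval x * ((ofFn (n + 1) B).coeff 0).derivative.eval x -
      x * ((ofFn (n + 1) B).coeff 1).eval x := by
  have h := coeff_zero_of_mul_X_sub_C_sub_derivative (hflow.mul_X_sub_C_sub_derivative_eq_C x)
  have hd := coeff_ofFn_comp (f := fun p : ℝ[X] => p.derivative.eval x) (by simp) B 0
  have he := coeff_ofFn_comp (f := fun p : ℝ[X] => x * p.eval x) (by simp) B 1
  simp only [Function.comp_def] at hd he
  rw [hd, he] at h
  linear_combination -h

theorem derivative_coeff_eq_zero (hflow : IsFlowDerivative F B R) {k : ℕ} (hk : n ≤ k + 1) :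
    derivative ((ofFn (n + 1) B).coeff k) = 0 := by
  have hvanish (j : ℕ) (hj : n < j) : (ofFn (n + 1) B).coeff j = 0 :=
    ofFn_coeff_eq_zero_of_ge B hj
  rcases lt_or_ge n k with hnk | hkn
  · rw [hvanish k hnk, derivative_zero]
  have htop : derivative ((ofFn (n + 1) B).coeff n) = 0 := by
    rw [hflow.derivative_coeff, hvanish (n + 1) (by omega), hvanish (n + 2) (by omega)]
    simp
  obtain rfl | rfl : k = n ∨ k + 1 = n := by omega
  · exact htop
  · rw [hflow.derivative_coeff, htop, hvanish (k + 2) (by omega)]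
    simp

theorem coeff_eq_C_eval_zero (hflow : IsFlowDerivative F B R) {k : ℕ} (hk : n ≤ k + 1) :
    (ofFn (n + 1) B).coeff k = C (((ofFn (n + 1) B).coeff k).eval 0) := by
  rw [← coeff_zero_eq_eval_zero]
  exact eq_C_of_derivative_eq_zero (hflow.derivative_coeff_eq_zero hk)

theorem derivative_coeff_of_add_two_eq (hflow : IsFlowDerivative F B R)
    (hone : ((ofFn (n + 1) B).coeff n).eval 0 = 1) {k : ℕ} (hk : k + 2 = n) :
    derivative ((ofFn (n + 1) B).coeff k) = C (n : ℝ) * X := by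
  rw [hflow.derivative_coeff, hflow.derivative_coeff_eq_zero (by omega), hk,
    hflow.coeff_eq_C_eval_zero le_self_add, hone, ← hk]
  push_cast
  simp only [map_one, mul_zero, mul_one, zero_add]

theorem derivative_coeff_of_add_three_eq (hflow : IsFlowDerivative F B R)
    (hone : ((ofFn (n + 1) B).coeff n).eval 0 = 1) {k : ℕ} (hk : k + 3 = n)
    (hzero : ((ofFn (n + 1) B).coeff (k + 2)).eval 0 = 0) :
    derivative ((ofFn (n + 1) B).coeff k) = C (n : ℝ) * (X * F) := by
  rw [hflow.derivative_coeff, hflow.derivative_coeff_of_add_two_eq hone (by omega),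
    hflow.coeff_eq_C_eval_zero (by omega), hzero]
  simp only [map_zero, mul_zero, add_zero]
  ring

end IsFlowDerivative

end Lienard

theorem stmt_8 (F : Polynomial ℝ) (n : ℕ) (hn : 3 ≤ n)
    (B : Fin (n + 1) → Polynomial ℝ)
    (hnorm1 : (B ⟨n, Nat.lt_succ_self n⟩).eval 0 = 1)
    (hnorm0 : ∀ i : Fin (n + 1), (i : ℕ) < n → (B i).eval 0 = 0)
    (R : Polynomial ℝ)
    (hflow : ∀ x y : ℝ,
      (∑ i : Fin (n + 1), (B i).derivative.eval x * y ^ (i : ℕ)) * (y - F.eval x) -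
        x * (∑ i : Fin (n + 1), (i : ℕ) * (B i).eval x * y ^ ((i : ℕ) - 1)) =
      R.eval x) :
    (B ⟨n, Nat.lt_succ_self n⟩ = 1) ∧
    (B ⟨n - 1, by omega⟩ = 0) ∧
    (∀ x : ℝ, (B ⟨n - 2, by omega⟩).eval x = n * x ^ 2 / 2) ∧
    (∀ x : ℝ, (B ⟨n - 3, by omega⟩).eval x = n * ∫ s in (0:ℝ)..x, s * F.eval s) ∧
    (∀ x : ℝ, R.eval x = -F.eval x * (B ⟨0, by omega⟩).derivative.eval x -
      x * (B ⟨1, by omega⟩).eval x) := by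
  replace hflow : Lienard.IsFlowDerivative F B R := hflow
  have hB (k : ℕ) (hk : k < n + 1) : B ⟨k, hk⟩ = (ofFn (n + 1) B).coeff k :=
    (ofFn_coeff_eq_val_of_lt B hk).symm
  have hzero (k : ℕ) (hk : k < n) : ((ofFn (n + 1) B).coeff k).eval 0 = 0 :=
    hB k (by omega) ▸ hnorm0 _ hk
  have hone : ((ofFn (n + 1) B).coeff n).eval 0 = 1 := hB _ _ ▸ hnorm1
  refine ⟨?_, ?_, fun x => ?_, fun x => ?_, fun x => ?_⟩
  · rw [hB, hflow.coeff_eq_C_eval_zero le_self_add, hone, map_one]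
  · rw [hB, hflow.coeff_eq_C_eval_zero (by omega), hzero _ (by omega), map_zero]
  · rw [hB, eval_eq_eval_zero_add_integral, hzero _ (by omega),
      hflow.derivative_coeff_of_add_two_eq hone (by omega)]
    simp only [eval_mul, eval_C, eval_X, zero_add]
    rw [integral_const_mul, integral_id]
    ring
  · rw [hB, eval_eq_eval_zero_add_integral, hzero _ (by omega),
      hflow.derivative_coeff_of_add_three_eq hone (by omega) (hzero _ (by omega))]
    simp only [eval_mul, eval_C, eval_X, zero_add]
    rw [integral_const_mul]
  · rw [hB, hB]
    exact hflow.eval_eq x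
end

section
/- Consider the Rychkov system ẋ = y − (x⁵ − x³ + δx), ẏ = −x with δ = 0.236252, and the polynomial B₄(x,y) = y⁴ + 2x²y² + (4/105)x³(15x⁴ − 21x² + 35δ)y + (1/30)x⁴(10x⁸ − 24x⁶ + 30δx⁴ + 15x⁴ − 40δx² + 30δ² + 30). Then the derivative of B₄ along the flow equals x⁴ R₁₂(x, δ), where R₁₂ is the explicit even degree-12 polynomial −(4/105)(105x¹² − 315x¹⁰ + (315δ+315)x⁸ − (630δ+105)x⁶ + (315δ²+315δ+120)x⁴ − (315δ²+126)x² + 35δ(3δ²+4)). -/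
noncomputable section

def rychkovB₄ (δ x y : ℝ) : ℝ :=
  y ^ 4 + 2 * x ^ 2 * y ^ 2 +
    (4 / 105) * x ^ 3 * (15 * x ^ 4 - 21 * x ^ 2 + 35 * δ) * y +
    (1 / 30) * x ^ 4 * (10 * x ^ 8 - 24 * x ^ 6 + 30 * δ * x ^ 4 + 15 * x ^ 4 -
      40 * δ * x ^ 2 + 30 * δ ^ 2 + 30)

theorem deriv_rychkovB₄_fst (δ x y : ℝ) :
    deriv (fun x' => rychkovB₄ δ x' y) x =
      4 * x * y ^ 2 + 4 * x ^ 2 * (x ^ 4 - x ^ 2 + δ) * y +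
        4 * x ^ 3 * (x ^ 8 - 2 * x ^ 6 + (2 * δ + 1) * x ^ 4 - 2 * δ * x ^ 2 + δ ^ 2 + 1) := by
  simp (disch := fun_prop) [rychkovB₄]
  ring

theorem deriv_rychkovB₄_snd (δ x y : ℝ) :
    deriv (fun y' => rychkovB₄ δ x y') y =
      4 * y ^ 3 + 4 * x ^ 2 * y + (4 / 105) * x ^ 3 * (15 * x ^ 4 - 21 * x ^ 2 + 35 * δ) := by
  simp (disch := fun_prop) [rychkovB₄]
  ring

end

theorem stmt_17 (B : ℝ → ℝ → ℝ → ℝ)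
    (hB : ∀ δ x y : ℝ, B δ x y =
      y ^ 4 + 2 * x ^ 2 * y ^ 2 +
        (4 / 105) * x ^ 3 * (15 * x ^ 4 - 21 * x ^ 2 + 35 * δ) * y +
        (1 / 30) * x ^ 4 * (10 * x ^ 8 - 24 * x ^ 6 + 30 * δ * x ^ 4 + 15 * x ^ 4 -
          40 * δ * x ^ 2 + 30 * δ ^ 2 + 30))
    (R : ℝ → ℝ → ℝ)
    (hR : ∀ δ x : ℝ, R δ x =
      -(4 / 105) * (105 * x ^ 12 - 315 * x ^ 10 + (315 * δ + 315) * x ^ 8 -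
        (630 * δ + 105) * x ^ 6 + (315 * δ ^ 2 + 315 * δ + 120) * x ^ 4 -
        (315 * δ ^ 2 + 126) * x ^ 2 + 35 * δ * (3 * δ ^ 2 + 4))) :
    ∀ δ x y : ℝ,
      deriv (fun x' => B δ x' y) x * (y - (x ^ 5 - x ^ 3 + δ * x)) +
        deriv (fun y' => B δ x y') y * (-x) = x ^ 4 * R δ x := by
  obtain rfl : B = rychkovB₄ := funext₃ hB
  intro δ x y
  rw [deriv_rychkovB₄_fst, deriv_rychkovB₄_snd, hR]
  ring
end

section
/- The Rychkov system ẋ = y − (x⁵ − x³ + δx), ẏ = −x with δ = 0.236252 has no nonconstant periodic orbit. -/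
/-!
`B₄` is a Lyapunov function for the system: along solutions its derivative is `x⁴ R₁₂(x, δ)`, and
`R₁₂(·, δ) < 0` for this δ. On a periodic orbit `B₄` is periodic and nonincreasing, hence constant,
so `x⁴ R₁₂(x, δ)` vanishes identically and `x ≡ 0`; then `ẋ = y` forces `y ≡ 0`, so the orbit is
the equilibrium at the origin.
-/

open Function

theorem HasDerivAt.fst {𝕜 E F : Type*} [NontriviallyNormedField 𝕜] [NormedAddCommGroup E]
    [NormedSpace 𝕜 E] [NormedAddCommGroup F] [NormedSpace 𝕜 F] {f : 𝕜 → E × F} {v : E × F}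
    {t : 𝕜} (h : HasDerivAt f v t) : HasDerivAt (fun s => (f s).1) v.1 t :=
  (hasFDerivAt_fst (p := f t)).comp_hasDerivAt t h

theorem HasDerivAt.snd {𝕜 E F : Type*} [NontriviallyNormedField 𝕜] [NormedAddCommGroup E]
    [NormedSpace 𝕜 E] [NormedAddCommGroup F] [NormedSpace 𝕜 F] {f : 𝕜 → E × F} {v : E × F}
    {t : 𝕜} (h : HasDerivAt f v t) : HasDerivAt (fun s => (f s).2) v.2 t :=
  (hasFDerivAt_snd (p := f t)).comp_hasDerivAt t h

theorem Function.Periodic.eq_of_antitone {α : Type*} [PartialOrder α] {f : ℝ → α} {T : ℝ}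
    (hp : Periodic f T) (hT : 0 < T) (hf : Antitone f) (s t : ℝ) : f s = f t := by
  wlog hst : s ≤ t generalizing s t
  · exact (this t s (le_of_not_ge hst)).symm
  obtain ⟨n, hn⟩ := exists_nat_ge ((t - s) / T)
  have hwrap : t ≤ s + n * T := by
    rw [div_le_iff₀ hT] at hn
    linarith
  refine le_antisymm ?_ (hf hst)
  calc f s = f (s + n * T) := ((hp.nat_mul n) s).symm
    _ ≤ f t := hf hwrap

theorem Function.Periodic.hasDerivAt_eq_zero_of_nonpos {f f' : ℝ → ℝ} {T : ℝ}
    (hp : Periodic f T) (hT : 0 < T) (hf : ∀ t, HasDerivAt f (f' t) t) (hf' : ∀ t, f' t ≤ 0)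
    (t : ℝ) : f' t = 0 := by
  have hconst : f = fun _ => f t :=
    funext fun s => hp.eq_of_antitone hT (antitone_of_hasDerivAt_nonpos hf hf') s t
  have hft := hf t
  rw [hconst] at hft
  exact hft.unique (hasDerivAt_const t (f t))

namespace Rychkov

noncomputable section

def field (δ : ℝ) (p : ℝ × ℝ) : ℝ × ℝ := (p.2 - (p.1 ^ 5 - p.1 ^ 3 + δ * p.1), -p.1)

def IsSolution (δ : ℝ) (γ : ℝ → ℝ × ℝ) : Prop := ∀ t, HasDerivAt γ (field δ (γ t)) t

/-- The paper's `B₄`. -/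
def lyapunov (δ x y : ℝ) : ℝ :=
  y ^ 4 + 2 * x ^ 2 * y ^ 2 + 4 / 105 * x ^ 3 * (15 * x ^ 4 - 21 * x ^ 2 + 35 * δ) * y
    + 1 / 30 * x ^ 4 * (10 * x ^ 8 - 24 * x ^ 6 + 30 * δ * x ^ 4 + 15 * x ^ 4 - 40 * δ * x ^ 2
      + 30 * δ ^ 2 + 30)

/-- The paper's `R₁₂(x, δ)`. -/
def dissipation (δ x : ℝ) : ℝ :=
  -4 * δ ^ 3 - 16 / 3 * δ + (12 * δ ^ 2 + 24 / 5) * x ^ 2 - (12 * δ ^ 2 + 12 * δ + 32 / 7) * x ^ 4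
    + (24 * δ + 4) * x ^ 6 - (12 * δ + 12) * x ^ 8 + 12 * x ^ 10 - 4 * x ^ 12

theorem IsSolution.hasDerivAt_lyapunov {δ : ℝ} {γ : ℝ → ℝ × ℝ} (hγ : IsSolution δ γ) (t : ℝ) :
    HasDerivAt (fun s => lyapunov δ (γ s).1 (γ s).2)
      ((γ t).1 ^ 4 * dissipation δ (γ t).1) t := by
  have hx := (hγ t).fst
  have hy := (hγ t).snd
  have H := ((hy.pow 4).add (((hx.pow 2).const_mul 2).mul (hy.pow 2))).add
    ((((hx.pow 3).const_mul (4 / 105)).mul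
      ((((hx.pow 4).const_mul 15).sub ((hx.pow 2).const_mul 21)).add_const (35 * δ))).mul hy) |>.add
    (((hx.pow 4).const_mul (1 / 30)).mul
      ((((((((hx.pow 8).const_mul 10).sub ((hx.pow 6).const_mul 24)).add
        ((hx.pow 4).const_mul (30 * δ))).add ((hx.pow 4).const_mul 15)).sub
        ((hx.pow 2).const_mul (40 * δ))).add_const (30 * δ ^ 2)).add_const 30))
  refine H.congr_deriv ?_
  simp only [field, dissipation, Pi.pow_apply, Pi.mul_apply, Pi.sub_apply, Pi.add_apply,
    Nat.cast_ofNat]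
  ring

theorem dissipation_neg (x : ℝ) : dissipation (236252 / 1000000) x < 0 := by
  unfold dissipation
  -- a sum-of-squares certificate in `x ^ 2`
  nlinarith [sq_nonneg (1 - 52 / 25 * x ^ 2 + 2 / 25 * x ^ 4 + 49 / 100 * x ^ 6),
    sq_nonneg (x ^ 2 - 243 / 100 * x ^ 4 + x ^ 6), sq_nonneg (x ^ 4 - 19 / 10 * x ^ 6),
    sq_nonneg (x ^ 6)]

theorem IsSolution.eq_zero_of_fst_eq_zero {δ : ℝ} {γ : ℝ → ℝ × ℝ} (hγ : IsSolution δ γ)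
    (hfst : ∀ t, (γ t).1 = 0) (t : ℝ) : γ t = 0 := by
  have hx := (hγ t).fst
  rw [show (fun s => (γ s).1) = fun _ => 0 from funext hfst] at hx
  have hsnd := hx.unique (hasDerivAt_const t 0)
  simp only [field, hfst t] at hsnd
  exact Prod.ext (hfst t) (by simpa using hsnd)

end

end Rychkov

open Rychkov in
theorem stmt_18 (δ : ℝ) (hδ : δ = 236252 / 1000000)
    (γ : ℝ → ℝ × ℝ)
    (hsol : ∀ t : ℝ, HasDerivAt γ
      ((γ t).2 - ((γ t).1 ^ 5 - (γ t).1 ^ 3 + δ * (γ t).1), -(γ t).1) t)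
    (T : ℝ) (hT : 0 < T) (hper : ∀ t : ℝ, γ (t + T) = γ t)
    (hnc : ∃ t : ℝ, γ t ≠ γ 0) : False := by
  have hγ : IsSolution δ γ := hsol
  have hneg : ∀ x, dissipation δ x < 0 := hδ ▸ dissipation_neg
  have hB : Periodic (fun s => lyapunov δ (γ s).1 (γ s).2) T := fun s => by simp only [hper s]
  have hrate := hB.hasDerivAt_eq_zero_of_nonpos hT hγ.hasDerivAt_lyapunov fun t =>
    mul_nonpos_of_nonneg_of_nonpos (by positivity) (hneg _).le
  have hfst : ∀ t, (γ t).1 = 0 := fun t =>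
    pow_eq_zero_iff (n := 4) (by norm_num) |>.mp <|
      (mul_eq_zero.mp (hrate t)).resolve_right (hneg _).ne
  obtain ⟨t, ht⟩ := hnc
  exact ht (by rw [hγ.eq_zero_of_fst_eq_zero hfst t, hγ.eq_zero_of_fst_eq_zero hfst 0])
end
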